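/- There exists a constant C > 0, depending only on q, such that for all n ∈ ½ℤ₊ with n ≥ 1/2, all half-integers i ∈ {−n, …, n} and j ∈ {−n+1/2, …, n−1/2}, every entry of the 2×2 matrix b⁺_{nij} − q^{n+j−1/2}(1−q^{2n+2i+2})^{1/2} · diag(q, 1) has absolute value at most C·q^{2n}. -/

import Mathlib

noncomputable section

open Real

/-- The q-number `[m] = (q^m - q^(-m))/(q - q⁻¹)`. -/
def qnum (q m : ℝ) : ℝ := (q ^ m - q ^ (-m)) / (q - q⁻¹)

/-- The 2×2 matrix `a⁺_{nij}`. -/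
def aP (q n i j : ℝ) : Matrix (Fin 2) (Fin 2) ℝ :=
  (q ^ ((i + j - 1/2) / 2) * Real.sqrt (qnum q (n + i + 1))) •
    !![q ^ (-n - 1/2) * Real.sqrt (qnum q (n + j + 3/2)) / qnum q (2*n + 2), 0;
       q ^ ((1:ℝ)/2) * Real.sqrt (qnum q (n - j + 1/2)) / (qnum q (2*n + 1) * qnum q (2*n + 2)),
       q ^ (-n) * Real.sqrt (qnum q (n + j + 1/2)) / qnum q (2*n + 1)]

/-- The 2×2 matrix `a⁻_{nij}`. -/
def aM (q n i j : ℝ) : Matrix (Fin 2) (Fin 2) ℝ :=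
  (q ^ ((i + j - 1/2) / 2) * Real.sqrt (qnum q (n - i))) •
    !![q ^ (n + 1) * Real.sqrt (qnum q (n - j + 1/2)) / qnum q (2*n + 1),
       -(q ^ ((1:ℝ)/2) * Real.sqrt (qnum q (n + j + 1/2)) / (qnum q (2*n) * qnum q (2*n + 1)));
       0, q ^ (n + 1/2) * Real.sqrt (qnum q (n - j - 1/2)) / qnum q (2*n)]

/-- The 2×2 matrix `b⁺_{nij}`. -/
def bP (q n i j : ℝ) : Matrix (Fin 2) (Fin 2) ℝ :=
  (q ^ ((i + j - 1/2) / 2) * Real.sqrt (qnum q (n + i + 1))) •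
    !![Real.sqrt (qnum q (n - j + 3/2)) / qnum q (2*n + 2), 0;
       -(q ^ (-n - 1) * Real.sqrt (qnum q (n + j + 1/2)) / (qnum q (2*n + 1) * qnum q (2*n + 2))),
       q ^ (-(1:ℝ)/2) * Real.sqrt (qnum q (n - j + 1/2)) / qnum q (2*n + 1)]

/-- The 2×2 matrix `b⁻_{nij}`. -/
def bM (q n i j : ℝ) : Matrix (Fin 2) (Fin 2) ℝ :=
  (q ^ ((i + j - 1/2) / 2) * Real.sqrt (qnum q (n - i))) •
    !![-(q ^ (-(1:ℝ)/2) * Real.sqrt (qnum q (n + j + 1/2)) / qnum q (2*n + 1)),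
       -(q ^ n * Real.sqrt (qnum q (n - j + 1/2)) / (qnum q (2*n) * qnum q (2*n + 1)));
       0, -(Real.sqrt (qnum q (n + j - 1/2)) / qnum q (2*n))]

/-- `n` is a nonnegative half-integer: `n ∈ ½ℤ₊ = {0, 1/2, 1, 3/2, …}`. -/
def HalfNat (n : ℝ) : Prop := ∃ N : ℕ, (N : ℝ) = 2 * n

/-- `i ∈ {-n, -n+1, …, n}`. -/
def IdxRange (n i : ℝ) : Prop := (∃ k : ℕ, (k : ℝ) = i + n) ∧ i ≤ n

/-- `j ∈ {-n+1/2, -n+3/2, …, n-1/2}`. -/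
def JRangeIn (n j : ℝ) : Prop := (∃ k : ℕ, (k : ℝ) = j + n - 1/2) ∧ j ≤ n - 1/2

/-- `j ∈ {-n-1/2, -n+1/2, …, n+1/2}`. -/
def JRangeOut (n j : ℝ) : Prop := (∃ k : ℕ, (k : ℝ) = j + n + 1/2) ∧ j ≤ n + 1/2

/-! Since `[m] = q^(1-m) (1 - q^(2m)) / (1 - q^2)`, each entry of `b⁺_{nij}` is a power of `q`
times a ratio of factors `1 - q^(2m)`. On the diagonal the power is `q^(n+j±1/2)` and the ratio
is `√(1 - q^(2n+2i+2))` times `√(1 - q^(2m)) / (1 - q^(2M))` with `M ≥ 1`; this last factor is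
`1 + O(q^(2m) + q^(2M))`, since `√(1 - q^(2m))` lies in `[1 - q^(2m), 1]`. For the admissible
`i, j` all exponents that occur are at least `2n`, and the lower-left entry carries the factor
`q^(2n)` outright. -/

theorem abs_sqrt_one_sub_sub_one_sub_le {a b : ℝ} (ha : 0 ≤ a) (hb : 0 ≤ b) :
    |√(1 - a) - (1 - b)| ≤ a + b := by
  have hle : √(1 - a) ≤ 1 := Real.sqrt_le_one.2 (by linarith)
  have hge : 1 - a ≤ √(1 - a) := by
    rcases le_total (1 - a) 0 with h | h
    · exact h.trans (Real.sqrt_nonneg _)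
    · exact Real.le_sqrt_of_sq_le (by nlinarith)
  rw [abs_le]; constructor <;> linarith

section
variable {q : ℝ}

theorem qnum_eq_rpow_mul (hq0 : 0 < q) (hq1 : q ≠ 1) (m : ℝ) :
    qnum q m = q ^ (1 - m) * (1 - q ^ (2 * m)) / (1 - q ^ 2) := by
  have hq2 : 1 - q ^ 2 ≠ 0 := by
    intro h
    have : (q - 1) * (q + 1) = 0 := by linear_combination -h
    rcases mul_eq_zero.1 this with h | h
    · exact hq1 (by linarith)
    · linarith
  have hqq : q - q⁻¹ ≠ 0 := by
    rw [show q - q⁻¹ = -(1 - q ^ 2) / q by field_simp; ring]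
    exact div_ne_zero (neg_ne_zero.2 hq2) hq0.ne'
  rw [qnum, div_eq_div_iff hqq hq2, Real.rpow_sub hq0, Real.rpow_one, mul_comm 2 m,
    Real.rpow_mul hq0.le, Real.rpow_neg hq0.le, Real.rpow_two]
  have := (Real.rpow_pos_of_pos hq0 m).ne'
  field_simp
  ring

theorem sqrt_qnum (hq0 : 0 < q) (hq1 : q < 1) (m : ℝ) :
    √(qnum q m) = q ^ ((1 - m) / 2) * √(1 - q ^ (2 * m)) / √(1 - q ^ 2) := by
  rw [qnum_eq_rpow_mul hq0 hq1.ne, Real.sqrt_div' _ (by nlinarith), Real.sqrt_mul (by positivity),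
    Real.sqrt_eq_rpow, ← Real.rpow_mul hq0.le]
  ring_nf

theorem rpow_mul_sqrt_qnum_mul_div_qnum (hq0 : 0 < q) (hq1 : q < 1) {M : ℝ}
    (hM : 0 < M) (e c m₁ m₂ : ℝ) :
    q ^ e * √(qnum q m₁) * (q ^ c * √(qnum q m₂) / qnum q M) =
      q ^ (e + c + (1 - m₁) / 2 + (1 - m₂) / 2 + M - 1) *
        (√(1 - q ^ (2 * m₁)) * √(1 - q ^ (2 * m₂)) / (1 - q ^ (2 * M))) := by
  have hs : 0 < 1 - q ^ 2 := by nlinarith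
  have hgM : 0 < 1 - q ^ (2 * M) := sub_pos.2 (Real.rpow_lt_one hq0.le hq1 (by positivity))
  rw [sqrt_qnum hq0 hq1, sqrt_qnum hq0 hq1, qnum_eq_rpow_mul hq0 hq1.ne,
    show e + c + (1 - m₁) / 2 + (1 - m₂) / 2 + M - 1
      = e + c + (1 - m₁) / 2 + (1 - m₂) / 2 - (1 - M) by ring,
    Real.rpow_sub hq0 _ (1 - M), Real.rpow_add hq0, Real.rpow_add hq0, Real.rpow_add hq0]
  have := (Real.rpow_pos_of_pos hq0 (1 - M)).ne'
  field_simp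
  rw [Real.sq_sqrt hs.le]

theorem rpow_mul_sqrt_qnum_mul_div_qnum_mul_qnum (hq0 : 0 < q) (hq1 : q < 1) {M₁ M₂ : ℝ}
    (hM₁ : 0 < M₁) (hM₂ : 0 < M₂) (e c m₁ m₂ : ℝ) :
    q ^ e * √(qnum q m₁) * (q ^ c * √(qnum q m₂) / (qnum q M₁ * qnum q M₂)) =
      q ^ (e + c + (1 - m₁) / 2 + (1 - m₂) / 2 + M₁ + M₂ - 2) *
        ((1 - q ^ 2) * √(1 - q ^ (2 * m₁)) * √(1 - q ^ (2 * m₂)) /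
          ((1 - q ^ (2 * M₁)) * (1 - q ^ (2 * M₂)))) := by
  have hs : 0 < 1 - q ^ 2 := by nlinarith
  have hgM₁ : 0 < 1 - q ^ (2 * M₁) := sub_pos.2 (Real.rpow_lt_one hq0.le hq1 (by positivity))
  rw [mul_comm (qnum q M₁), ← div_div, ← mul_div_assoc,
    rpow_mul_sqrt_qnum_mul_div_qnum hq0 hq1 hM₂, qnum_eq_rpow_mul hq0 hq1.ne M₁,
    show e + c + (1 - m₁) / 2 + (1 - m₂) / 2 + M₁ + M₂ - 2
      = e + c + (1 - m₁) / 2 + (1 - m₂) / 2 + M₂ - 1 - (1 - M₁) by ring,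
    Real.rpow_sub hq0 _ (1 - M₁)]
  have := (Real.rpow_pos_of_pos hq0 (1 - M₁)).ne'
  field_simp

theorem bP_eq (hq0 : 0 < q) (hq1 : q < 1) {n : ℝ} (hn : 0 ≤ n) (i j : ℝ) :
    bP q n i j =
      !![q ^ (n + j + 1/2) * (√(1 - q ^ (2 * (n + i + 1))) * √(1 - q ^ (2 * (n - j + 3/2))) /
          (1 - q ^ (2 * (2 * n + 2)))), 0;
        -(q ^ (2 * n) * ((1 - q ^ 2) * √(1 - q ^ (2 * (n + i + 1))) *
          √(1 - q ^ (2 * (n + j + 1/2))) /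
          ((1 - q ^ (2 * (2 * n + 1))) * (1 - q ^ (2 * (2 * n + 2)))))),
        q ^ (n + j - 1/2) * (√(1 - q ^ (2 * (n + i + 1))) * √(1 - q ^ (2 * (n - j + 1/2))) /
          (1 - q ^ (2 * (2 * n + 1))))] := by
  ext r s
  fin_cases r <;> fin_cases s <;>
    simp only [bP, Matrix.smul_apply, Matrix.of_apply, Matrix.cons_val', Matrix.cons_val_zero,
      Matrix.cons_val_one, Matrix.empty_val', Matrix.cons_val_fin_one, smul_eq_mul, Fin.zero_eta,
      Fin.mk_one, mul_zero]
  · have h := rpow_mul_sqrt_qnum_mul_div_qnum hq0 hq1 (M := 2 * n + 2) (by linarith)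
      ((i + j - 1 / 2) / 2) 0 (n + i + 1) (n - j + 3 / 2)
    rw [Real.rpow_zero, one_mul] at h
    rw [h]; congr 2; ring
  · rw [mul_neg, rpow_mul_sqrt_qnum_mul_div_qnum_mul_qnum hq0 hq1 (by linarith) (by linarith)]
    congr 3; ring
  · rw [rpow_mul_sqrt_qnum_mul_div_qnum hq0 hq1 (by linarith)]
    congr 2; ring

theorem one_sub_sq_le_one_sub_rpow (hq0 : 0 < q) (hq1 : q ≤ 1) {M : ℝ} (hM : 1 ≤ M) :
    1 - q ^ 2 ≤ 1 - q ^ (2 * M) := by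
  have := Real.rpow_le_rpow_of_exponent_ge hq0 hq1 (by linarith : (2:ℝ) ≤ 2 * M)
  norm_cast at this
  linarith

theorem abs_rpow_mul_mul_sqrt_div_sub_le (hq0 : 0 < q) (hq1 : q < 1) {x m M P a : ℝ}
    (hx0 : 0 ≤ x) (hx1 : x ≤ 1) (hM : 1 ≤ M) (ham : a ≤ P + 2 * m) (haM : a ≤ P + 2 * M) :
    |q ^ P * (x * √(1 - q ^ (2 * m)) / (1 - q ^ (2 * M))) - q ^ P * x| ≤
      2 / (1 - q ^ 2) * q ^ a := by
  have hgM := one_sub_sq_le_one_sub_rpow hq0 hq1.le hM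
  have hs : 0 < 1 - q ^ 2 := by nlinarith
  have hpow : ∀ {b}, a ≤ b → q ^ b ≤ q ^ a := Real.rpow_le_rpow_of_exponent_ge hq0 hq1.le
  have key : q ^ P * (q ^ (2 * m) + q ^ (2 * M)) ≤ 2 * q ^ a := by
    rw [mul_add, ← Real.rpow_add hq0, ← Real.rpow_add hq0]
    linarith [hpow ham, hpow haM]
  have hgM' : 0 < 1 - q ^ (2 * M) := hs.trans_le hgM
  have hdiff : |√(1 - q ^ (2 * m)) - (1 - q ^ (2 * M))| / (1 - q ^ (2 * M)) ≤
      (q ^ (2 * m) + q ^ (2 * M)) / (1 - q ^ 2) :=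
    div_le_div₀ (by positivity) (abs_sqrt_one_sub_sub_one_sub_le (by positivity) (by positivity))
      hs hgM
  have hfactor : q ^ P * (x * √(1 - q ^ (2 * m)) / (1 - q ^ (2 * M))) - q ^ P * x =
      q ^ P * x * ((√(1 - q ^ (2 * m)) - (1 - q ^ (2 * M))) / (1 - q ^ (2 * M))) := by
    field_simp
  calc |q ^ P * (x * √(1 - q ^ (2 * m)) / (1 - q ^ (2 * M))) - q ^ P * x|
      = q ^ P * x * (|√(1 - q ^ (2 * m)) - (1 - q ^ (2 * M))| / (1 - q ^ (2 * M))) := by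
        rw [hfactor, abs_mul, abs_div, abs_of_nonneg (by positivity), abs_of_pos hgM']
    _ ≤ q ^ P * 1 * ((q ^ (2 * m) + q ^ (2 * M)) / (1 - q ^ 2)) := by gcongr
    _ ≤ 2 / (1 - q ^ 2) * q ^ a := by
        rw [mul_one, ← mul_div_assoc, div_mul_eq_mul_div]
        gcongr

theorem abs_rpow_mul_mul_div_le (hq0 : 0 < q) (hq1 : q < 1) {x y M₁ M₂ : ℝ}
    (hx0 : 0 ≤ x) (hx1 : x ≤ 1) (hy0 : 0 ≤ y) (hy1 : y ≤ 1) (hM₁ : 1 ≤ M₁) (hM₂ : 1 ≤ M₂)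
    (a : ℝ) :
    |q ^ a * ((1 - q ^ 2) * x * y / ((1 - q ^ (2 * M₁)) * (1 - q ^ (2 * M₂))))| ≤
      q ^ a / (1 - q ^ 2) := by
  have hs : 0 < 1 - q ^ 2 := by nlinarith
  have hgM₁ := one_sub_sq_le_one_sub_rpow hq0 hq1.le hM₁
  have hgM₂ := one_sub_sq_le_one_sub_rpow hq0 hq1.le hM₂
  have : 0 < 1 - q ^ (2 * M₁) := hs.trans_le hgM₁
  have : 0 < 1 - q ^ (2 * M₂) := hs.trans_le hgM₂
  rw [abs_of_nonneg (by positivity)]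
  calc q ^ a * ((1 - q ^ 2) * x * y / ((1 - q ^ (2 * M₁)) * (1 - q ^ (2 * M₂))))
      ≤ q ^ a * ((1 - q ^ 2) * 1 * 1 / ((1 - q ^ 2) * (1 - q ^ 2))) := by gcongr
    _ = q ^ a / (1 - q ^ 2) := by field_simp

end

/-- There is `C > 0` depending only on `q` such that for all `n ∈ ½ℤ₊` with
`n ≥ 1/2`, `i ∈ {-n,…,n}`, `j ∈ {-n+1/2,…,n-1/2}`, every entry of
`b⁺_{nij} - q^(n+j-1/2) (1-q^(2n+2i+2))^(1/2) diag(q, 1)`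
has absolute value at most `C·q^(2n)`. -/
theorem bPlus_asymptotics' (q : ℝ) (hq0 : 0 < q) (hq1 : q < 1) :
    ∃ C : ℝ, 0 < C ∧ ∀ n i j : ℝ, HalfNat n → 1/2 ≤ n → IdxRange n i → JRangeIn n j →
      ∀ r s : Fin 2,
        |(bP q n i j - (q ^ (n + j - 1/2) * Real.sqrt (1 - q ^ (2*n + 2*i + 2))) •
            !![q, 0; 0, 1]) r s|
          ≤ C * q ^ (2 * n) := by
  have hs : 0 < 1 - q ^ 2 := by nlinarith
  refine ⟨2 / (1 - q ^ 2), by positivity, ?_⟩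
  rintro n i j - hn ⟨⟨k, hk⟩, hin⟩ ⟨⟨l, hl⟩, hjn⟩ r s
  have hni : -n ≤ i := by linarith [k.cast_nonneg (α := ℝ)]
  have hnj : -n + 1/2 ≤ j := by linarith [l.cast_nonneg (α := ℝ)]
  have hg0 : ∀ m : ℝ, 0 ≤ √(1 - q ^ m) := fun _ ↦ Real.sqrt_nonneg _
  have hg1 : ∀ m : ℝ, √(1 - q ^ m) ≤ 1 := fun m ↦
    Real.sqrt_le_one.2 (by linarith [Real.rpow_nonneg hq0.le m])
  rw [bP_eq hq0 hq1 (by linarith), show 2 * n + 2 * i + 2 = 2 * (n + i + 1) by ring]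
  fin_cases r <;> fin_cases s <;>
    simp only [Matrix.sub_apply, Matrix.smul_apply, Matrix.of_apply, Matrix.cons_val',
      Matrix.cons_val_zero, Matrix.cons_val_one, Matrix.empty_val', Matrix.cons_val_fin_one,
      smul_eq_mul, Fin.zero_eta, Fin.mk_one, mul_zero, mul_one, sub_zero]
  · rw [mul_right_comm, ← Real.rpow_add_one hq0.ne',
      show n + j - 1 / 2 + 1 = n + j + 1 / 2 by ring]
    exact abs_rpow_mul_mul_sqrt_div_sub_le hq0 hq1 (hg0 _) (hg1 _) (by linarith) (by linarith)
      (by linarith)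
  · rw [abs_zero]; positivity
  · rw [abs_neg]
    calc _ ≤ q ^ (2 * n) / (1 - q ^ 2) :=
          abs_rpow_mul_mul_div_le hq0 hq1 (hg0 _) (hg1 _) (hg0 _) (hg1 _) (by linarith)
            (by linarith) _
      _ ≤ 2 / (1 - q ^ 2) * q ^ (2 * n) := by
          rw [div_mul_eq_mul_div]
          gcongr
          linarith [Real.rpow_nonneg hq0.le (2 * n)]
  · exact abs_rpow_mul_mul_sqrt_div_sub_le hq0 hq1 (hg0 _) (hg1 _) (by linarith) (by linarith)
      (by linarith)
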